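/- Define the Gandhi polynomials by P̃_1(z) = 1 and P̃_{r+1}(z) = (z+1)^2·P̃_r(z+1) − z^2·P̃_r(z), and define P_r by P_0 = 1, P_{r+1}(n) = n^2·(P_r(n) − P_r(n−1)) + n·P_r(n−1). Then for all r ≥ 1, P_r(n) = (−1)^{r−1}·n·P̃_r(−n) as polynomials. -/

import Mathlib

/-! Induction on `r`. Since `-(n - 1) = (-n) + 1`, the substitution `z = -n` turns the backward
shift `n ↦ n - 1` of the `Ppoly` recurrence into the forward shift `z ↦ z + 1` of the Gandhi
recurrence; the remaining terms then agree up to one sign change per step. -/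

open Polynomial

noncomputable def Ppoly : ℕ → Polynomial ℤ
  | 0 => 1
  | r + 1 =>
      X ^ 2 * (Ppoly r - (Ppoly r).comp (X - 1)) + X * (Ppoly r).comp (X - 1)

/-- `gandhi r` is the Gandhi polynomial `P̃_{r+1}`, so `gandhi 0 = P̃_1 = 1`. -/
noncomputable def gandhi : ℕ → Polynomial ℤ
  | 0 => 1
  | r + 1 => (X + 1) ^ 2 * (gandhi r).comp (X + 1) - X ^ 2 * gandhi r

lemma comp_neg_X_comp_X_sub_one {R : Type*} [CommRing R] (p : R[X]) :
    (p.comp (-X)).comp (X - 1) = (p.comp (X + 1)).comp (-X) := by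
  rw [comp_assoc, comp_assoc]
  congr 1
  simp only [neg_comp, X_comp, add_comp, one_comp]
  ring

theorem Ppoly_succ_eq_smul_gandhi_comp_neg (k : ℕ) :
    Ppoly (k + 1) = ((-1 : ℤ) ^ k) • (X * (gandhi k).comp (-X)) := by
  induction k with
  | zero => simp [Ppoly, gandhi]
  | succ k ih =>
    rw [Ppoly, ih, gandhi]
    simp only [smul_eq_C_mul, mul_comp, sub_comp, pow_comp, X_comp, neg_comp, add_comp,
      one_comp, comp_neg_X_comp_X_sub_one, C_neg, C_1, C_pow]
    ring

theorem stmt_17 (r : ℕ) (hr : 1 ≤ r) :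
    Ppoly r = ((-1 : ℤ) ^ (r - 1)) • (X * (gandhi (r - 1)).comp (-X)) := by
  obtain ⟨k, rfl⟩ := Nat.exists_eq_add_of_le' hr
  exact Ppoly_succ_eq_smul_gandhi_comp_neg k
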